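/- arXiv:1407.6289 — 2 statements merged into one kernel-verified Lean document; each statement's English description precedes it below -/
import Mathlib

section
/- Fix integers q1, q2 ≥ 2 and let (η(x))_{x ∈ ℤ} be i.i.d. random variables, each uniformly distributed on {1,…,q1} × {1,…,q2}. For each x ∈ ℤ and i ∈ {1,2}, let D_i(x) = 1 if η(x) and η(x+1) differ in coordinate i and D_i(x) = 0 otherwise. Then the family {D_i(x) : x ∈ ℤ, i ∈ {1,2}} consists of mutually independent random variables, and D_i(x) is Bernoulli with success probability 1 − 1/q_i. -/
open MeasureTheory ProbabilityTheory
open scoped ENNReal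

/-- The disagreement indicators: `disagree η (x, i) ω = true` iff the cultures at `x` and
`x + 1` differ in coordinate `i` (where `i = 0` is the first feature, `i = 1` the second). -/
def disagree {Ω : Type*} {q1 q2 : ℕ} (η : ℤ → Ω → Fin q1 × Fin q2) :
    ℤ × Fin 2 → Ω → Bool :=
  fun p ω =>
    if p.2 = 0 then decide ((η p.1 ω).1 ≠ (η (p.1 + 1) ω).1)
    else decide ((η p.1 ω).2 ≠ (η (p.1 + 1) ω).2)

/-!
The next culture `η (x + 1)` is uniform and independent of the past `(η y)_{y ≤ x}`, so
whatever the value `a` of `η x`, the probability that `η (x + 1)` differs from `a` in every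
coordinate of a prescribed set `K` is `∏_{i ∈ K} (1 - 1/q_i)`. Conditioning on the rightmost
edge of a finite set of edges therefore peels off its factor, and by induction the probability
of any joint disagreement event is the product of the single-edge probabilities.
-/

open scoped Finset Function

section EdgeEvents

variable {Ω β : Type*} [MeasurableSpace β]

abbrev pastMeasurableSpace (X : ℤ → Ω → β) (x : ℤ) : MeasurableSpace Ω :=
  ⨆ z ∈ Set.Iic x, MeasurableSpace.comap (X z) ‹_›

variable {X : ℤ → Ω → β}

lemma measurable_pastMeasurableSpace {x y : ℤ} (hyx : y ≤ x) :
    Measurable[pastMeasurableSpace X x] (X y) :=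
  Measurable.of_comap_le
    (le_iSup₂ (f := fun z (_ : z ∈ Set.Iic x) => MeasurableSpace.comap (X z) _) y hyx)

variable [MeasurableSpace Ω] {P : Measure Ω}

lemma indep_pastMeasurableSpace_comap_succ (hmeas : ∀ x, Measurable (X x))
    (hindep : iIndepFun X P) (x : ℤ) :
    Indep (pastMeasurableSpace X x) (MeasurableSpace.comap (X (x + 1)) ‹_›) P := by
  simpa [pastMeasurableSpace] using
    indep_iSup_of_disjoint (fun z => (hmeas z).comap_le) hindep.iIndep
      (S := Set.Iic x) (T := {x + 1}) (by simp)

variable [Countable β] [MeasurableSingletonClass β]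

lemma measure_inter_edge_eq_mul (hmeas : ∀ x, Measurable (X x)) (hindep : iIndepFun X P)
    {x : ℤ} {C : Set Ω}
    (hC : MeasurableSet[pastMeasurableSpace X x] C)
    {R : β → β → Prop} {p : ℝ≥0∞} (hR : ∀ a, P (X (x + 1) ⁻¹' {b | R a b}) = p) :
    P (C ∩ {ω | R (X x ω) (X (x + 1) ω)}) = P C * p := by
  have hle : pastMeasurableSpace X x ≤ ‹MeasurableSpace Ω› :=
    iSup₂_le fun z _ => (hmeas z).comap_le
  have hCa : ∀ a, MeasurableSet[pastMeasurableSpace X x] (C ∩ X x ⁻¹' {a}) :=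
    fun a => hC.inter (measurable_pastMeasurableSpace le_rfl (measurableSet_singleton a))
  have hdisj : Pairwise (Disjoint on fun a => C ∩ X x ⁻¹' {a}) :=
    (pairwise_disjoint_fiber (X x)).mono fun _ _ h =>
      h.mono Set.inter_subset_right Set.inter_subset_right
  have hsplit : C ∩ {ω | R (X x ω) (X (x + 1) ω)} =
      ⋃ a, (C ∩ X x ⁻¹' {a}) ∩ X (x + 1) ⁻¹' {b | R a b} := by
    ext ω; simp
  -- Condition on the value `a` of `X x`: `C ∩ {X x = a}` lies in the past of `X (x + 1)`.
  calc P (C ∩ {ω | R (X x ω) (X (x + 1) ω)})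
      = ∑' a, P ((C ∩ X x ⁻¹' {a}) ∩ X (x + 1) ⁻¹' {b | R a b}) := by
        rw [hsplit, measure_iUnion
          (hdisj.mono fun _ _ h => h.mono Set.inter_subset_left Set.inter_subset_left)
          fun a => (hle _ (hCa a)).inter (hmeas _ (Set.to_countable _).measurableSet)]
    _ = ∑' a, P (C ∩ X x ⁻¹' {a}) * p := by
        congr 1; ext a
        rw [(Indep_iff _ _ _).1 (indep_pastMeasurableSpace_comap_succ hmeas hindep x) _ _ (hCa a)
          ⟨_, (Set.to_countable _).measurableSet, rfl⟩, hR]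
    _ = P C * p := by
        rw [ENNReal.tsum_mul_right, ← measure_iUnion hdisj fun a => hle _ (hCa a),
          ← Set.inter_iUnion, ← Set.preimage_iUnion, Set.iUnion_of_singleton, Set.preimage_univ,
          Set.inter_univ]

theorem measure_biInter_edge_eq_prod [IsProbabilityMeasure P] (hmeas : ∀ x, Measurable (X x))
    (hindep : iIndepFun X P) (R : ℤ → β → β → Prop) (p : ℤ → ℝ≥0∞)
    (hR : ∀ x a, P (X (x + 1) ⁻¹' {b | R x a b}) = p x) (T : Finset ℤ) :
    P (⋂ x ∈ T, {ω | R x (X x ω) (X (x + 1) ω)}) = ∏ x ∈ T, p x := by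
  induction T using Finset.induction_on_max with
  | empty => simp
  | insert x T hlt ih =>
    have hpast : MeasurableSet[pastMeasurableSpace X x]
        (⋂ y ∈ T, {ω | R y (X y ω) (X (y + 1) ω)}) :=
      Finset.measurableSet_biInter T fun y hy =>
        ((measurable_pastMeasurableSpace (hlt y hy).le).prodMk
          (measurable_pastMeasurableSpace (hlt y hy)))
          (Set.to_countable {ab : β × β | R y ab.1 ab.2}).measurableSet
    rw [Finset.set_biInter_insert, Set.inter_comm,
      measure_inter_edge_eq_mul hmeas hindep hpast (hR x), ih,
      Finset.prod_insert fun hx => (hlt x hx).false, mul_comm]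

end EdgeEvents

lemma comap_eq_generateFrom_preimage_true {Ω : Type*} (f : Ω → Bool) :
    MeasurableSpace.comap f inferInstance = MeasurableSpace.generateFrom {f ⁻¹' {true}} :=
  le_antisymm
    (measurable_to_bool (mα := .generateFrom _)
      (MeasurableSpace.measurableSet_generateFrom (Set.mem_singleton _))).comap_le
    (MeasurableSpace.generateFrom_le (by rintro _ rfl; exact ⟨{true}, trivial, rfl⟩))

lemma iIndepFun_bool_iff_iIndepSet {Ω ι : Type*} [MeasurableSpace Ω] {P : Measure Ω}
    {f : ι → Ω → Bool} : iIndepFun f P ↔ iIndepSet (fun i => f i ⁻¹' {true}) P := by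
  simp only [iIndepFun_iff_iIndep, iIndepSet_iff_iIndep, comap_eq_generateFrom_preimage_true]

lemma measure_preimage_finset_eq_card_mul {Ω α : Type*} [MeasurableSpace Ω] [MeasurableSpace α]
    [MeasurableSingletonClass α] {P : Measure Ω} {Y : Ω → α} (hY : Measurable Y)
    {c : ℝ≥0∞} (hc : ∀ a, P {ω | Y ω = a} = c) (s : Finset α) :
    P (Y ⁻¹' s) = #s * c := by
  rw [← sum_measure_preimage_singleton s fun a _ => hY (measurableSet_singleton a)]
  simp [Set.preimage, hc]

lemma Finset.prod_image_fst_prod_ite_mem {α β M : Type*} [DecidableEq α] [DecidableEq β]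
    [Fintype β] [CommMonoid M] (S : Finset (α × β)) (g : α × β → M) :
    ∏ x ∈ S.image Prod.fst, ∏ i, (if (x, i) ∈ S then g (x, i) else 1) =
      ∏ j ∈ S, g j := by
  rw [← Finset.prod_product (f := fun j => if j ∈ S then g j else 1), Finset.prod_ite_mem,
    Finset.inter_eq_right.2 fun j hj =>
      Finset.mem_product.2 ⟨Finset.mem_image_of_mem _ hj, Finset.mem_univ _⟩]

lemma card_filter_imp_ne_mul_inv {q : ℕ} (a : Fin q) (p : Prop) [Decidable p] :
    (#{c | p → a ≠ c} : ℝ≥0∞) * (q : ℝ≥0∞)⁻¹ =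
      if p then 1 - (q : ℝ≥0∞)⁻¹ else 1 := by
  have hq : (q : ℝ≥0∞) ≠ 0 := by exact_mod_cast a.pos.ne'
  split_ifs with hp
  · rw [show #{c | p → a ≠ c} = q - 1 by simp [hp, Finset.filter_ne], ENNReal.natCast_sub,
      Nat.cast_one, ENNReal.sub_mul fun _ _ => ENNReal.inv_ne_top.2 hq,
      ENNReal.mul_inv_cancel hq (by simp), one_mul]
  · simp [hp, ENNReal.mul_inv_cancel hq]

section TwoFeatures

variable {q1 q2 : ℕ}

def differsAt (i : Fin 2) (a b : Fin q1 × Fin q2) : Bool :=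
  if i = 0 then decide (a.1 ≠ b.1) else decide (a.2 ≠ b.2)

noncomputable def disagreeProb (q1 q2 : ℕ) : Fin 2 → ℝ≥0∞ :=
  ![1 - (q1 : ℝ≥0∞)⁻¹, 1 - (q2 : ℝ≥0∞)⁻¹]

variable {Ω : Type*} {η : ℤ → Ω → Fin q1 × Fin q2}

lemma disagree_apply (j : ℤ × Fin 2) (ω : Ω) :
    disagree η j ω = differsAt j.2 (η j.1 ω) (η (j.1 + 1) ω) := rfl

variable [MeasurableSpace Ω] {P : Measure Ω}

lemma measurable_disagree (hmeas : ∀ x, Measurable (η x)) (j : ℤ × Fin 2) :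
    Measurable (disagree η j) :=
  (Measurable.of_discrete (f := fun ab : _ × _ => differsAt j.2 ab.1 ab.2)).comp
    ((hmeas j.1).prodMk (hmeas (j.1 + 1)))

lemma measure_preimage_differsAt (hmeas : ∀ x, Measurable (η x))
    (hunif : ∀ x (a : Fin q1 × Fin q2), P {ω | η x ω = a} = ((q1 : ℝ≥0∞) * q2)⁻¹)
    (y : ℤ) (a : Fin q1 × Fin q2) (K : Fin 2 → Prop) [DecidablePred K] :
    P (η y ⁻¹' {b | ∀ i, K i → differsAt i a b = true}) =
      ∏ i, if K i then disagreeProb q1 q2 i else 1 := by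
  have hset : {b | ∀ i, K i → differsAt i a b = true} =
      ↑((({c | K 0 → a.1 ≠ c} : Finset _) ×ˢ ({c | K 1 → a.2 ≠ c} : Finset _))) := by
    ext b; simp [Fin.forall_fin_two, differsAt]
  rw [hset, measure_preimage_finset_eq_card_mul (hmeas y) (hunif y), Finset.card_product,
    Nat.cast_mul, ENNReal.mul_inv (by simp) (by simp), mul_mul_mul_comm, card_filter_imp_ne_mul_inv,
    card_filter_imp_ne_mul_inv, Fin.prod_univ_two]
  rfl

lemma measure_biInter_disagree [IsProbabilityMeasure P] (hmeas : ∀ x, Measurable (η x))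
    (hindep : iIndepFun η P)
    (hunif : ∀ x (a : Fin q1 × Fin q2), P {ω | η x ω = a} = ((q1 : ℝ≥0∞) * q2)⁻¹)
    (S : Finset (ℤ × Fin 2)) :
    P (⋂ j ∈ S, {ω | disagree η j ω = true}) = ∏ j ∈ S, disagreeProb q1 q2 j.2 := by
  classical
  have hev : ⋂ j ∈ S, {ω | disagree η j ω = true} = ⋂ x ∈ S.image Prod.fst,
      {ω | ∀ i, (x, i) ∈ S → differsAt i (η x ω) (η (x + 1) ω) = true} := by
    ext ω
    simp only [disagree_apply, Set.mem_iInter, Set.mem_ofPred_eq, Finset.mem_image]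
    exact ⟨fun h x _ i hi => h (x, i) hi, fun h j hj => h j.1 ⟨j, hj, rfl⟩ j.2 hj⟩
  rw [hev, measure_biInter_edge_eq_prod hmeas hindep _ _
    fun x a => measure_preimage_differsAt hmeas hunif (x + 1) a fun i => (x, i) ∈ S]
  exact Finset.prod_image_fst_prod_ite_mem S fun j => disagreeProb q1 q2 j.2

end TwoFeatures

theorem stmt1_general {Ω : Type*} [MeasurableSpace Ω] (P : Measure Ω) [IsProbabilityMeasure P]
    (q1 q2 : ℕ)
    (η : ℤ → Ω → Fin q1 × Fin q2)
    (hmeas : ∀ x, Measurable (η x))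
    (hindep : iIndepFun η P)
    (hunif : ∀ x (a : Fin q1 × Fin q2), P {ω | η x ω = a} = ((q1 : ℝ≥0∞) * q2)⁻¹) :
    iIndepFun (disagree η) P ∧
      ∀ x : ℤ,
        P {ω | disagree η (x, 0) ω = true} = 1 - (q1 : ℝ≥0∞)⁻¹ ∧
        P {ω | disagree η (x, 1) ω = true} = 1 - (q2 : ℝ≥0∞)⁻¹ := by
  have hinter := measure_biInter_disagree hmeas hindep hunif
  have hsingle : ∀ j, P {ω | disagree η j ω = true} = disagreeProb q1 q2 j.2 := fun j => by
    simpa using hinter {j}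
  refine ⟨?_, fun x => ⟨hsingle (x, 0), hsingle (x, 1)⟩⟩
  rw [iIndepFun_bool_iff_iIndepSet,
    iIndepSet_iff_meas_biInter fun j => measurable_disagree hmeas j (measurableSet_singleton true)]
  exact fun S => (hinter S).trans (Finset.prod_congr rfl fun j _ => (hsingle j).symm)

/-- if `(η x)_{x ∈ ℤ}` are i.i.d. uniform on `{1,…,q1} × {1,…,q2}`
(modeled as `Fin q1 × Fin q2`), then the disagreement indicators `D_i(x)`, for `x ∈ ℤ`
and `i ∈ {1, 2}`, are mutually independent, and `D_i(x)` is Bernoulli with success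
probability `1 - 1/q_i`. -/
theorem stmt1 {Ω : Type*} [MeasurableSpace Ω] (P : Measure Ω) [IsProbabilityMeasure P]
    (q1 q2 : ℕ) (hq1 : 2 ≤ q1) (hq2 : 2 ≤ q2)
    (η : ℤ → Ω → Fin q1 × Fin q2)
    (hmeas : ∀ x, Measurable (η x))
    (hindep : iIndepFun η P)
    (hunif : ∀ x (a : Fin q1 × Fin q2), P {ω | η x ω = a} = ((q1 : ℝ≥0∞) * q2)⁻¹) :
    iIndepFun (disagree η) P ∧
      ∀ x : ℤ,
        P {ω | disagree η (x, 0) ω = true} = 1 - (q1 : ℝ≥0∞)⁻¹ ∧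
        P {ω | disagree η (x, 1) ω = true} = 1 - (q2 : ℝ≥0∞)⁻¹ :=
  stmt1_general P q1 q2 η hmeas hindep hunif
end

section
/- For all integers q1, q2 ≥ 2 with q1 + q2 ≥ 7, one has (1/2)(q1 + q2 − 2)(1 − 1/q1)(1 − 1/q2) − (1 − 1/(q1 q2)) ≥ 1/10, and the value 1/10 is attained at (q1, q2) = (2, 5). -/
/-- for all integers `q1, q2 ≥ 2` with `q1 + q2 ≥ 7`,
`(1/2)(q1 + q2 - 2)(1 - 1/q1)(1 - 1/q2) - (1 - 1/(q1 q2)) ≥ 1/10`, and the value `1/10`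
is attained at `(q1, q2) = (2, 5)`. -/
theorem stmt16 :
    (∀ q1 q2 : ℕ, 2 ≤ q1 → 2 ≤ q2 → 7 ≤ q1 + q2 →
      1 / 10 ≤ (1 / 2 : ℝ) * ((q1 : ℝ) + (q2 : ℝ) - 2) * (1 - 1 / (q1 : ℝ)) *
          (1 - 1 / (q2 : ℝ)) - (1 - 1 / ((q1 : ℝ) * (q2 : ℝ)))) ∧
    (1 / 2 : ℝ) * ((2 : ℝ) + (5 : ℝ) - 2) * (1 - 1 / (2 : ℝ)) * (1 - 1 / (5 : ℝ))
        - (1 - 1 / ((2 : ℝ) * (5 : ℝ))) = 1 / 10 := by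
  constructor
  · intro q1 q2 h1 h2 h7
    have ha : (2:ℝ) ≤ (q1:ℝ) := by exact_mod_cast h1
    have hb : (2:ℝ) ≤ (q2:ℝ) := by exact_mod_cast h2
    have hs : (7:ℝ) ≤ (q1:ℝ) + (q2:ℝ) := by exact_mod_cast h7
    set a := (q1:ℝ); set b := (q2:ℝ)
    have ha0 : (0:ℝ) < a := by linarith
    have hb0 : (0:ℝ) < b := by linarith
    have hnum : 0 ≤ 5*(a+b-2)*(a-1)*(b-1) - 11*(a*b) + 10 := by
      nlinarith [mul_nonneg (sub_nonneg.2 ha) (sub_nonneg.2 hb),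
        mul_pos ha0 hb0, sq_nonneg (a-b), sq_nonneg (a+b-7),
        mul_nonneg (mul_nonneg (sub_nonneg.2 ha) (sub_nonneg.2 hb)) (by linarith : (0:ℝ) ≤ a+b-7)]
    have heq : (1 / 2 : ℝ) * (a + b - 2) * (1 - 1 / a) * (1 - 1 / b) - (1 - 1 / (a * b))
        - 1/10 = (5*(a+b-2)*(a-1)*(b-1) - 11*(a*b) + 10) / (10*(a*b)) := by
      field_simp
      ring
    have hpos : 0 < 10*(a*b) := by positivity
    nlinarith [div_nonneg hnum (le_of_lt hpos), heq]
  · norm_num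
end
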